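/- For every cardinal λ there exists an atomless complete Boolean algebra B that is countably generated and has cardinality at least λ. -/

import Mathlib

universe u

open Cardinal

/-- A subset `S` of a complete Boolean algebra `B` is a *complete Boolean subalgebra*
if it contains `⊥` and `⊤`, and is closed under complementation and under
arbitrary suprema and infima. -/
def IsCompleteSubalgebra {B : Type u} [CompleteBooleanAlgebra B] (S : Set B) : Prop :=
  ⊥ ∈ S ∧ ⊤ ∈ S ∧ (∀ b ∈ S, bᶜ ∈ S) ∧
    (∀ T : Set B, T ⊆ S → sSup T ∈ S) ∧ (∀ T : Set B, T ⊆ S → sInf T ∈ S)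

/-- A complete Boolean algebra `B` is *countably generated* if there is a countable
subset `X ⊆ B` such that the only complete Boolean subalgebra of `B` containing `X`
is `B` itself. -/
def CountablyGeneratedCBA (B : Type u) [CompleteBooleanAlgebra B] : Prop :=
  ∃ X : Set B, X.Countable ∧
    ∀ S : Set B, IsCompleteSubalgebra S → X ⊆ S → S = Set.univ

/-- A complete Boolean algebra is *atomless* if below every nonzero element there is
a strictly smaller nonzero element. -/
def AtomlessCBA (B : Type u) [CompleteBooleanAlgebra B] : Prop :=
  ∀ b : B, ⊥ < b → ∃ c : B, ⊥ < c ∧ c < b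


/-!
The algebra is the Gaifman–Hales algebra: the regular open algebra of `ℕ → K`, `K` a discrete
well-ordered set of size at least `lam`, generated by the countably many clopen sets
`{f | f i < f j}`. The fibres `{f | f j = a}` are generated from these by induction on `a`:
`{f | f j < a}` is the join of the fibres below `a`, and `{f | a < f j}` is the regular join of
the sets `{f | a ≤ f i < f j}` over `i`, which are dense in it because any finite set of
coordinates leaves a free coordinate `i` that can be set to `a`. The fibres generate the
cylinders, and every regular open set is the join of the cylinders it contains.
-/

open TopologicalSpace Heyting Set

-- The Boolean algebra structure comes first so that `⊥` is `⟨⊥, _⟩` rather than the lifted `⊥ᶜᶜ`.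
instance Heyting.Regular.instCompleteBooleanAlgebra {α : Type*} [Order.Frame α] :
    CompleteBooleanAlgebra (Regular α) :=
  { (inferInstance : BooleanAlgebra (Regular α)), Regular.gi.liftCompleteLattice with }

namespace IsCompleteSubalgebra

variable {B : Type*} [CompleteBooleanAlgebra B] {S : Set B}

theorem top_mem (hS : IsCompleteSubalgebra S) : ⊤ ∈ S := hS.2.1

theorem compl_mem (hS : IsCompleteSubalgebra S) {b : B} (hb : b ∈ S) : bᶜ ∈ S := hS.2.2.1 b hb

theorem sSup_mem (hS : IsCompleteSubalgebra S) {T : Set B} (hT : T ⊆ S) : sSup T ∈ S :=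
  hS.2.2.2.1 T hT

theorem iSup_mem (hS : IsCompleteSubalgebra S) {ι : Sort*} {f : ι → B} (hf : ∀ i, f i ∈ S) :
    iSup f ∈ S :=
  hS.sSup_mem (range_subset_iff.2 hf)

theorem inf_mem (hS : IsCompleteSubalgebra S) {a b : B} (ha : a ∈ S) (hb : b ∈ S) : a ⊓ b ∈ S := by
  simpa using hS.2.2.2.2 _ (pair_subset ha hb)

end IsCompleteSubalgebra

abbrev RegularOpens (X : Type*) [TopologicalSpace X] := Regular (Opens X)

namespace RegularOpens

variable {X : Type*} [TopologicalSpace X]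

instance : SetLike (RegularOpens X) X where
  coe a := ((a : Opens X) : Set X)
  coe_injective _ _ h := Regular.coe_injective (SetLike.coe_injective h)

theorem le_iff_subset {a b : RegularOpens X} : a ≤ b ↔ (a : Set X) ⊆ b := Iff.rfl

theorem isOpen (a : RegularOpens X) : IsOpen (a : Set X) := (a : Opens X).isOpen

theorem nonempty_iff_ne_bot {a : RegularOpens X} : (a : Set X).Nonempty ↔ a ≠ ⊥ :=
  nonempty_iff_ne_empty.trans (not_congr (SetLike.coe_set_eq (q := ⊥)))

theorem coe_compl_compl (U : Opens X) : ((Uᶜᶜ : Opens X) : Set X) = interior (closure U) := by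
  rw [Opens.coe_compl_eq_interior_compl, Opens.coe_compl_eq_interior_compl, ← closure_compl,
    compl_compl]

theorem coe_sSup (s : Set (RegularOpens X)) :
    ((sSup s : RegularOpens X) : Set X) = interior (closure (⋃ a ∈ s, (a : Set X))) := by
  change (((sSup ((↑) '' s) : Opens X)ᶜᶜ : Opens X) : Set X) = _
  rw [coe_compl_compl, Opens.coe_sSup, Set.biUnion_image]
  rfl

theorem sSup_eq_of_subset_closure {s : Set (RegularOpens X)} {b : RegularOpens X}
    (hle : ∀ a ∈ s, a ≤ b) (hb : (b : Set X) ⊆ closure (⋃ a ∈ s, (a : Set X))) : sSup s = b :=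
  le_antisymm (sSup_le hle) <| by
    rw [le_iff_subset, coe_sSup]
    exact interior_maximal hb b.isOpen

def ofClopen (s : Clopens X) : RegularOpens X :=
  ⟨s.toOpens, Opens.ext <| by
    rw [coe_compl_compl]
    exact (congrArg interior s.isClosed.closure_eq).trans s.isOpen.interior_eq⟩

theorem coe_ofClopen (s : Clopens X) : (ofClopen s : Set X) = s := rfl

theorem ofClopen_injective : Function.Injective (ofClopen (X := X)) :=
  fun _ _ h => Clopens.ext (congrArg (fun a : RegularOpens X => (a : Set X)) h)

theorem ofClopen_top : ofClopen (⊤ : Clopens X) = ⊤ := rfl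

theorem ofClopen_inf (s t : Clopens X) : ofClopen (s ⊓ t) = ofClopen s ⊓ ofClopen t := rfl

theorem ofClopen_compl (s : Clopens X) : ofClopen sᶜ = (ofClopen s)ᶜ :=
  Regular.coe_injective <| Opens.ext <| by
    rw [Regular.coe_compl, Opens.coe_compl_eq_interior_compl]
    exact s.isClosed.isOpen_compl.interior_eq.symm

theorem sSup_ofClopen_of_iUnion_eq {s : Set (Clopens X)} {t : Clopens X}
    (h : ⋃ c ∈ s, (c : Set X) = t) : sSup (ofClopen '' s) = ofClopen t := by
  refine sSup_eq_of_subset_closure ?_ ?_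
  · rintro _ ⟨c, hc, rfl⟩
    rw [le_iff_subset, coe_ofClopen, coe_ofClopen, ← h]
    exact Set.subset_biUnion_of_mem (u := fun c : Clopens X => (c : Set X)) hc
  · rw [Set.biUnion_image]
    exact h.symm ▸ subset_closure

end RegularOpens

section ProductSpace

open RegularOpens

variable {ι K : Type*} [TopologicalSpace K] [DiscreteTopology K]

def coordClopen (i : ι) (A : Set K) : Clopens (ι → K) :=
  ⟨(· i) ⁻¹' A, (isClopen_discrete A).preimage (continuous_apply i)⟩

theorem mem_coordClopen {i : ι} {A : Set K} {f : ι → K} : f ∈ coordClopen i A ↔ f i ∈ A := Iff.rfl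

def cylinder (f : ι → K) (F : Finset ι) : Clopens (ι → K) :=
  ⟨{g | ∀ i ∈ F, g i = f i}, by
    convert isClopen_biInter_finset fun i (_ : i ∈ F) => (coordClopen i {f i}).isClopen
    ext
    simp [mem_coordClopen]⟩

theorem mem_cylinder {f g : ι → K} {F : Finset ι} : g ∈ cylinder f F ↔ ∀ i ∈ F, g i = f i :=
  Iff.rfl

theorem cylinder_empty (f : ι → K) : cylinder f ∅ = ⊤ :=
  Clopens.ext <| Set.eq_univ_of_forall fun _ i hi => absurd hi (Finset.notMem_empty i)

theorem cylinder_insert [DecidableEq ι] (f : ι → K) (i : ι) (F : Finset ι) :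
    cylinder f (insert i F) = coordClopen i {f i} ⊓ cylinder f F :=
  Clopens.ext <| Set.ext fun _ => Finset.forall_mem_insert _ _ _

theorem exists_cylinder_subset {U : Set (ι → K)} (hU : IsOpen U) {f : ι → K} (hf : f ∈ U) :
    ∃ F, (cylinder f F : Set (ι → K)) ⊆ U := by
  obtain ⟨I, u, hu, hIu⟩ := isOpen_pi_iff.1 hU f hf
  exact ⟨I, fun g hg => hIu fun i hi => (hg i hi).symm ▸ (hu i hi).2⟩

theorem sSup_ofClopen_cylinder_le (b : RegularOpens (ι → K)) :
    sSup (ofClopen '' {c | ofClopen c ≤ b ∧ ∃ f F, c = cylinder f F}) = b := by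
  refine sSup_eq_of_subset_closure ?_ fun f hf => subset_closure ?_
  · rintro _ ⟨c, hc, rfl⟩
    exact hc.1
  · obtain ⟨F, hF⟩ := exists_cylinder_subset b.isOpen hf
    exact Set.mem_biUnion ⟨cylinder f F, ⟨hF, f, F, rfl⟩, rfl⟩ (mem_cylinder.2 fun _ _ => rfl)

theorem sSup_ofClopen_coordClopen_singleton (i : ι) (A : Set K) :
    sSup ((fun a => ofClopen (coordClopen i {a})) '' A) = ofClopen (coordClopen i A) := by
  rw [← Set.image_image ofClopen]
  refine sSup_ofClopen_of_iUnion_eq (Set.ext fun f => ?_)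
  simp [mem_coordClopen]

theorem atomlessCBA_regularOpens_pi [Infinite ι] [Nontrivial K] :
    AtomlessCBA (RegularOpens (ι → K)) := by
  classical
  intro b hb
  obtain ⟨f, hf⟩ := nonempty_iff_ne_bot.2 hb.ne'
  obtain ⟨F, hF⟩ := exists_cylinder_subset b.isOpen hf
  obtain ⟨i, hi⟩ := Infinite.exists_notMem_finset F
  obtain ⟨x, hx⟩ := exists_ne (f i)
  have hupdate : Function.update f i x ∈ b :=
    hF fun k hk => Function.update_of_ne (ne_of_mem_of_not_mem hk hi) _ _
  refine ⟨b ⊓ ofClopen (coordClopen i {f i}),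
    bot_lt_iff_ne_bot.2 (nonempty_iff_ne_bot.1 ⟨f, hf, rfl⟩), inf_le_left.lt_of_not_ge fun h => hx ?_⟩
  have hxi : Function.update f i x i = f i := (h hupdate).2
  rwa [Function.update_self] at hxi

theorem ofClopen_coordClopen_singleton_injective (i : ι) :
    Function.Injective fun a : K => ofClopen (coordClopen i {a}) := fun a _ h =>
  (SetLike.ext_iff.1 (ofClopen_injective h) fun _ => a).1 rfl

theorem coordClopen_compl (i : ι) (A : Set K) : coordClopen i Aᶜ = (coordClopen i A)ᶜ := rfl

theorem IsCompleteSubalgebra.ofClopen_cylinder_mem {S : Set (RegularOpens (ι → K))}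
    (hS : IsCompleteSubalgebra S) (hcoord : ∀ (a : K) (j : ι), ofClopen (coordClopen j {a}) ∈ S)
    (f : ι → K) (F : Finset ι) :
    ofClopen (cylinder f F) ∈ S := by
  classical
  induction F using Finset.induction_on with
  | empty =>
    rw [cylinder_empty, ofClopen_top]
    exact hS.top_mem
  | insert i F _ ih =>
    rw [cylinder_insert, ofClopen_inf]
    exact hS.inf_mem (hcoord _ _) ih

variable [LinearOrder K]

def ltClopen (i j : ι) : Clopens (ι → K) :=
  ⟨(fun f => (f i, f j)) ⁻¹' {p : K × K | p.1 < p.2},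
    (isClopen_discrete _).preimage ((continuous_apply i).prodMk (continuous_apply j))⟩

theorem mem_ltClopen {i j : ι} {f : ι → K} : f ∈ ltClopen i j ↔ f i < f j := Iff.rfl

theorem iSup_ofClopen_coordClopen_Ici_inf_ltClopen [Infinite ι] (a : K) (j : ι) :
    ⨆ i, ofClopen (coordClopen i (Ici a) ⊓ ltClopen i j) = ofClopen (coordClopen j (Ioi a)) := by
  classical
  refine sSup_eq_of_subset_closure ?_ fun f hf => mem_closure_iff.2 fun U hU hfU => ?_
  · rintro _ ⟨i, rfl⟩ g ⟨hga, hgj⟩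
    exact (mem_coordClopen.1 hga).trans_lt (mem_ltClopen.1 hgj)
  · obtain ⟨F, hF⟩ := exists_cylinder_subset hU hfU
    obtain ⟨i, hi⟩ := Infinite.exists_notMem_finset (insert j F)
    obtain ⟨hij, hiF⟩ : i ≠ j ∧ i ∉ F := by simpa [not_or] using hi
    refine ⟨Function.update f i a,
      hF fun k hk => Function.update_of_ne (ne_of_mem_of_not_mem hk hiF) _ _,
      Set.mem_biUnion ⟨i, rfl⟩ ⟨?_, ?_⟩⟩
    · simp [mem_coordClopen]
    · rw [SetLike.mem_coe, mem_ltClopen, Function.update_self, Function.update_of_ne hij.symm]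
      exact hf

namespace IsCompleteSubalgebra

variable {S : Set (RegularOpens (ι → K))}

theorem ofClopen_coordClopen_singleton_mem [Infinite ι] [WellFoundedLT K]
    (hS : IsCompleteSubalgebra S) (hlt : ∀ i j, ofClopen (ltClopen i j) ∈ S) (a : K) (j : ι) :
    ofClopen (coordClopen j {a}) ∈ S := by
  induction a using WellFoundedLT.induction generalizing j with
  | _ a ih =>
  have hIio (i : ι) : ofClopen (coordClopen i (Iio a)) ∈ S := by
    rw [← sSup_ofClopen_coordClopen_singleton]
    exact hS.sSup_mem (by rintro _ ⟨b, hb, rfl⟩; exact ih b hb i)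
  have hIoi : ofClopen (coordClopen j (Ioi a)) ∈ S := by
    rw [← iSup_ofClopen_coordClopen_Ici_inf_ltClopen]
    refine hS.iSup_mem fun i => ?_
    rw [ofClopen_inf, ← compl_Iio, coordClopen_compl, ofClopen_compl]
    exact hS.inf_mem (hS.compl_mem (hIio i)) (hlt i j)
  clear ih
  have hsingleton : coordClopen j {a} = (coordClopen j (Iio a))ᶜ ⊓ (coordClopen j (Ioi a))ᶜ := by
    rw [← coordClopen_compl, ← coordClopen_compl]
    exact Clopens.ext <| Set.ext fun f => by simp [mem_coordClopen, le_antisymm_iff, and_comm]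
  rw [hsingleton, ofClopen_inf, ofClopen_compl, ofClopen_compl]
  exact hS.inf_mem (hS.compl_mem (hIio j)) (hS.compl_mem hIoi)

theorem eq_univ_of_ofClopen_ltClopen_mem [Infinite ι] [WellFoundedLT K]
    (hS : IsCompleteSubalgebra S) (hlt : ∀ i j, ofClopen (ltClopen i j) ∈ S) : S = Set.univ :=
  eq_univ_of_forall fun b => sSup_ofClopen_cylinder_le b ▸ hS.sSup_mem <| by
    rintro _ ⟨_, ⟨-, f, F, rfl⟩, rfl⟩
    exact hS.ofClopen_cylinder_mem (hS.ofClopen_coordClopen_singleton_mem hlt) f F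

end IsCompleteSubalgebra

theorem countablyGeneratedCBA_regularOpens_pi [Countable ι] [Infinite ι] [WellFoundedLT K] :
    CountablyGeneratedCBA (RegularOpens (ι → K)) :=
  ⟨range fun p : ι × ι => ofClopen (ltClopen p.1 p.2), countable_range _,
    fun _ hS hX => hS.eq_univ_of_ofClopen_ltClopen_mem fun i j => hX ⟨(i, j), rfl⟩⟩

end ProductSpace

/-- For every cardinal `lam` there exists an atomless, countably generated complete
Boolean algebra of cardinality at least `lam`. -/
theorem exists_atomless_countably_generated_cba_of_large_card (lam : Cardinal.{u}) :
    ∃ (B : Type u) (_ : CompleteBooleanAlgebra B),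
      AtomlessCBA B ∧ CountablyGeneratedCBA B ∧ lam ≤ #B := by
  let K := (max lam 2).ord.ToType
  let _ : TopologicalSpace K := ⊥
  have : DiscreteTopology K := ⟨rfl⟩
  have hK : #K = max lam 2 := by rw [mk_toType, card_ord]
  have : Nontrivial K :=
    one_lt_iff_nontrivial.1 <| hK ▸ Cardinal.one_lt_two.trans_le (le_max_right _ _)
  refine ⟨RegularOpens (ℕ → K), inferInstance, atomlessCBA_regularOpens_pi,
    countablyGeneratedCBA_regularOpens_pi, ?_⟩
  calc lam ≤ #K := hK ▸ le_max_left _ _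
    _ ≤ #(RegularOpens (ℕ → K)) := mk_le_of_injective (ofClopen_coordClopen_singleton_injective 0)
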